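/- For every total Boolean function f, D(f) ≤ C_1(f) · bs(f); combined with C_1(f) ≤ s(f)·bs(f) ≤ bs(f)^2, this yields D(f) ≤ bs(f)^3. -/

import Mathlib

/-!
Sensitivity and certificates (Nisan): take a maximal family of pairwise disjoint *minimal*
sensitive blocks at `x`. It has at most `bs f` members; each member `B` has at most `s f`
elements, because at `flip x B` every bit of `B` is sensitive; and its union certifies `x`,
since otherwise the difference set to a counterexample would contain a further minimal block.

Decision trees (Beals et al.): repeatedly pick a 1-input consistent with the answers so far and
query one of its minimal 1-certificates. Each round gives every consistent 0-input `y` one more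
sensitive block, disjoint from the earlier ones: the bits where `y` differs from the chosen
1-input on its certificate. So after `bs f` rounds the consistent inputs are all 1-inputs or
all 0-inputs, at a cost of at most `C₁(f)` queries per round.
-/

namespace QC

variable {ι : Type*} [Fintype ι] [DecidableEq ι]

/-- A total Boolean function on inputs indexed by `ι`. -/
abbrev BFun (ι : Type*) := (ι → Bool) → Bool

/-- Flip the bits of `x` in the set `S`. -/
def flip (x : ι → Bool) (S : Finset ι) : ι → Bool := fun i => if i ∈ S then !x i else x i

/-- There exist `k` pairwise disjoint sensitive blocks for `f` at `x`. -/
def HasBS (f : BFun ι) (x : ι → Bool) (k : ℕ) : Prop :=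
  ∃ S : Fin k → Finset ι, (∀ i j, i ≠ j → Disjoint (S i) (S j)) ∧ ∀ i, f (flip x (S i)) ≠ f x

/-- Block sensitivity of `f` at `x`. -/
noncomputable def bsAt (f : BFun ι) (x : ι → Bool) : ℕ := sSup {k | HasBS f x k}

/-- Block sensitivity of `f`. -/
noncomputable def bs (f : BFun ι) : ℕ := sSup {k | ∃ x, HasBS f x k}

/-- `S` is a certificate for `f` on input `x`. -/
def IsCert (f : BFun ι) (x : ι → Bool) (S : Finset ι) : Prop :=
  ∀ y, (∀ i ∈ S, y i = x i) → f y = f x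

/-- Certificate complexity of `f` at `x`. -/
noncomputable def CAt (f : BFun ι) (x : ι → Bool) : ℕ :=
  sInf {k | ∃ S : Finset ι, IsCert f x S ∧ S.card = k}

/-- Certificate complexity of `f`. -/
noncomputable def C (f : BFun ι) : ℕ := sSup (Set.range (CAt f))

/-- `b`-certificate complexity: max certificate complexity over inputs with value `b`. -/
noncomputable def Cb (f : BFun ι) (b : Bool) : ℕ := sSup {k | ∃ x, f x = b ∧ CAt f x = k}

/-- Sensitivity of `f` at `x`. -/
def sensAt (f : BFun ι) (x : ι → Bool) : ℕ :=
  (Finset.univ.filter (fun i => f (flip x {i}) ≠ f x)).card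

/-- Sensitivity of `f`. -/
noncomputable def sens (f : BFun ι) : ℕ := sSup (Set.range (sensAt f))

/-- Deterministic decision trees querying variables indexed by `ι`. -/
inductive DTree (ι : Type*) where
  | leaf (b : Bool)
  | node (i : ι) (t0 t1 : DTree ι)

/-- Evaluate a decision tree on input `x`. -/
def DTree.eval : DTree ι → (ι → Bool) → Bool
  | .leaf b, _ => b
  | .node i t0 t1, x => if x i then t1.eval x else t0.eval x

/-- Depth (worst-case number of queries) of a decision tree. -/
def DTree.depth : DTree ι → ℕ
  | .leaf _ => 0
  | .node _ t0 t1 => max t0.depth t1.depth + 1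

/-- The tree `T` computes `f`. -/
def Computes (T : DTree ι) (f : BFun ι) : Prop := ∀ x, T.eval x = f x

/-- Deterministic query (decision-tree) complexity. -/
noncomputable def D (f : BFun ι) : ℕ := sInf {d | ∃ T : DTree ι, Computes T f ∧ T.depth = d}

/-- A multilinear polynomial: degree at most 1 in each variable. -/
def Multilinear (p : MvPolynomial ι ℝ) : Prop := ∀ m ∈ p.support, ∀ i, m i ≤ 1

/-- Embed Boolean inputs into the reals. -/
def b2r (x : ι → Bool) : ι → ℝ := fun i => if x i then 1 else 0

/-- `p` represents the Boolean function `f` on the Boolean cube. -/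
def Represents (p : MvPolynomial ι ℝ) (f : BFun ι) : Prop :=
  ∀ x, MvPolynomial.eval (b2r x) p = if f x then 1 else 0

/-- Exact degree of `f`: least total degree of a multilinear representing polynomial. -/
noncomputable def degF (f : BFun ι) : ℕ :=
  sInf {d | ∃ p : MvPolynomial ι ℝ, Multilinear p ∧ Represents p f ∧ p.totalDegree = d}

end QC

namespace QC

open Finset
open scoped Function

variable {ι : Type*}

def HasDisjointBlocks (P : Finset ι → Prop) (k : ℕ) : Prop :=
  ∃ B : Fin k → Finset ι, Pairwise (Disjoint on B) ∧ ∀ j, P (B j)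

namespace HasDisjointBlocks

variable {P P' : Finset ι → Prop} {k : ℕ}

lemma zero (P : Finset ι → Prop) : HasDisjointBlocks P 0 :=
  ⟨Fin.elim0, Subsingleton.pairwise, fun j => j.elim0⟩

lemma mono (h : HasDisjointBlocks P k) (hPP' : ∀ B, P B → P' B) : HasDisjointBlocks P' k :=
  let ⟨B, hB, hBP⟩ := h
  ⟨B, hB, fun j => hPP' _ (hBP j)⟩

lemma snoc {B : Fin k → Finset ι} (hB : Pairwise (Disjoint on B)) (hBP : ∀ j, P (B j))
    {D : Finset ι} (hD : P D) (hBD : ∀ j, Disjoint (B j) D) : HasDisjointBlocks P (k + 1) := by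
  refine ⟨Fin.snoc B D, ?_, Fin.lastCases (by simpa using hD) (by simpa using hBP)⟩
  intro i j hij
  induction i using Fin.lastCases <;> induction j using Fin.lastCases <;>
    simp only [Function.onFun, Fin.snoc_last, Fin.snoc_castSucc]
  · exact absurd rfl hij
  · exact (hBD _).symm
  · exact hBD _
  · exact hB fun h => hij (congrArg _ h)

lemma le_card [Fintype ι] (h : HasDisjointBlocks P k) (hP : ∀ B, P B → B.Nonempty) :
    k ≤ Fintype.card ι := by
  classical
  obtain ⟨B, hB, hBP⟩ := h
  calc k = ∑ _j : Fin k, 1 := by simp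
    _ ≤ ∑ j, (B j).card := sum_le_sum fun j _ => (hP _ (hBP j)).card_pos
    _ = (univ.biUnion B).card := (card_biUnion (hB.set_pairwise _)).symm
    _ ≤ Fintype.card ι := card_le_univ _

end HasDisjointBlocks

section Certificate

variable (f : BFun ι)

lemma CAt_le_card {x : ι → Bool} {S : Finset ι} (hS : IsCert f x S) : CAt f x ≤ S.card :=
  Nat.sInf_le ⟨S, hS, rfl⟩

variable [Fintype ι]

lemma isCert_univ (x : ι → Bool) : IsCert f x univ := fun _ hy =>
  congrArg f (funext fun i => hy i (mem_univ i))

lemma exists_isCert_card_eq_CAt (x : ι → Bool) : ∃ S, IsCert f x S ∧ S.card = CAt f x :=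
  Nat.sInf_mem (s := {k | ∃ S : Finset ι, IsCert f x S ∧ S.card = k})
    ⟨_, univ, isCert_univ f x, rfl⟩

lemma CAt_le_Cb {x : ι → Bool} {b : Bool} (hx : f x = b) : CAt f x ≤ Cb f b :=
  le_csSup ⟨Fintype.card ι, by rintro _ ⟨y, -, rfl⟩; exact CAt_le_card f (isCert_univ f y)⟩
    ⟨x, hx, rfl⟩

end Certificate

def subcube (Q : Finset ι) (σ : ι → Bool) : Set (ι → Bool) := {x | ∀ i ∈ Q, x i = σ i}

def ComputesOn (T : DTree ι) (g : BFun ι) (P : Set (ι → Bool)) : Prop :=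
  ∀ x ∈ P, T.eval x = g x

lemma computesOn_leaf_false {g : BFun ι} {P : Set (ι → Bool)} (h : ¬ ∃ x ∈ P, g x = true) :
    ComputesOn (.leaf false) g P :=
  fun x hx => by simpa [DTree.eval] using fun hgx => h ⟨x, hx, hgx⟩

lemma eq_of_mem_subcube {Q : Finset ι} {σ x y : ι → Bool} (hx : x ∈ subcube Q σ)
    (hy : y ∈ subcube Q σ) : ∀ i ∈ Q, x i = y i :=
  fun i hi => (hx i hi).trans (hy i hi).symm

variable [DecidableEq ι] (f : BFun ι)

lemma hasBS_iff {x : ι → Bool} {k : ℕ} :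
    HasBS f x k ↔ HasDisjointBlocks (fun B => f (flip x B) ≠ f x) k :=
  ⟨fun ⟨S, hS, hSx⟩ => ⟨S, fun i j hij => hS i j hij, hSx⟩,
    fun ⟨S, hS, hSx⟩ => ⟨S, fun _ _ hij => hS hij, hSx⟩⟩

lemma flip_empty (x : ι → Bool) : flip x ∅ = x := by
  funext i; simp [flip]

lemma nonempty_of_flip_ne {x : ι → Bool} {B : Finset ι} (h : f (flip x B) ≠ f x) :
    B.Nonempty := by
  rw [nonempty_iff_ne_empty]
  rintro rfl
  exact h (by rw [flip_empty])

lemma flip_flip_singleton {x : ι → Bool} {B : Finset ι} {i : ι} (hi : i ∈ B) :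
    flip (flip x B) {i} = flip x (B.erase i) := by
  funext j
  by_cases hj : j = i
  · subst hj; simp [flip, hi]
  · simp [flip, hj]

lemma flip_filter_ne_apply {y z : ι → Bool} {S : Finset ι} {i : ι} (hi : i ∈ S) :
    flip y (S.filter fun j => y j ≠ z j) i = z i := by
  cases hy : y i <;> cases hz : z i <;> simp [flip, hi, hy, hz]

lemma flip_univ_filter_ne [Fintype ι] (y z : ι → Bool) :
    flip y (univ.filter fun j => y j ≠ z j) = z :=
  funext fun _ => flip_filter_ne_apply (mem_univ _)

section Fintype

variable [Fintype ι]

lemma bddAbove_bs : BddAbove {k | ∃ x, HasBS f x k} :=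
  ⟨Fintype.card ι, fun _ ⟨_, h⟩ =>
    ((hasBS_iff f).1 h).le_card fun _ => nonempty_of_flip_ne f⟩

lemma HasDisjointBlocks.le_bs {P : Finset ι → Prop} {x : ι → Bool} {k : ℕ}
    (h : HasDisjointBlocks P k) (hP : ∀ B, P B → f (flip x B) ≠ f x) : k ≤ bs f :=
  le_csSup (bddAbove_bs f) ⟨x, (hasBS_iff f).2 (h.mono hP)⟩

lemma sensAt_le_sens (x : ι → Bool) : sensAt f x ≤ sens f :=
  le_csSup ⟨Fintype.card ι, by rintro _ ⟨y, rfl⟩; exact card_le_univ _⟩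
    (Set.mem_range_self x)

lemma sensAt_le_bs (x : ι → Bool) : sensAt f x ≤ bs f := by
  set T := univ.filter fun i => f (flip x {i}) ≠ f x
  refine HasDisjointBlocks.le_bs f (x := x) (P := fun B => f (flip x B) ≠ f x)
    ⟨fun j => {(T.equivFin.symm j : ι)}, fun i j hij => ?_,
      fun j => (mem_filter.1 (T.equivFin.symm j).2).2⟩ fun _ h => h
  exact disjoint_singleton.2 fun h => hij (T.equivFin.symm.injective (Subtype.ext h))

lemma sens_le_bs : sens f ≤ bs f :=
  csSup_le' <| by rintro _ ⟨x, rfl⟩; exact sensAt_le_bs f x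

lemma card_le_sens_of_minimal {x : ι → Bool} {B : Finset ι}
    (hB : Minimal (fun B => f (flip x B) ≠ f x) B) : B.card ≤ sens f := by
  have hsub : B ⊆ univ.filter fun i => f (flip (flip x B) {i}) ≠ f (flip x B) := by
    intro i hi
    rw [mem_filter, flip_flip_singleton hi, not_not.1 (hB.not_prop_of_lt (erase_ssubset hi))]
    exact ⟨mem_univ i, Ne.symm hB.prop⟩
  exact (card_le_card hsub).trans (sensAt_le_sens f _)

lemma exists_minimal_disjoint_of_not_isCert {x : ι → Bool} {S : Finset ι}
    (hS : ¬ IsCert f x S) :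
    ∃ B, Minimal (fun B => f (flip x B) ≠ f x) B ∧ Disjoint B S := by
  obtain ⟨y, hyS, hy⟩ : ∃ y, (∀ i ∈ S, y i = x i) ∧ f y ≠ f x := by
    simpa [IsCert] using hS
  obtain ⟨B, hBD, hB⟩ := exists_minimal_le_of_wellFoundedLT
    (fun B => f (flip x B) ≠ f x) _ (by rwa [flip_univ_filter_ne x y])
  refine ⟨B, hB, disjoint_left.2 fun i hiB hiS => ?_⟩
  exact (mem_filter.1 (hBD hiB)).2 (hyS i hiS).symm

lemma CAt_le_sens_mul_bs (x : ι → Bool) : CAt f x ≤ sens f * bs f := by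
  classical
  let IsMinimalBlocks := HasDisjointBlocks (Minimal fun B => f (flip x B) ≠ f x)
  set k := Nat.findGreatest IsMinimalBlocks (bs f)
  obtain ⟨B, hB, hBmin⟩ : IsMinimalBlocks k :=
    Nat.findGreatest_spec (Nat.zero_le _) (HasDisjointBlocks.zero _)
  have hcert : IsCert f x (univ.biUnion B) := by
    by_contra hnot
    obtain ⟨D, hD, hDB⟩ := exists_minimal_disjoint_of_not_isCert f hnot
    have hsucc : IsMinimalBlocks (k + 1) :=
      HasDisjointBlocks.snoc hB hBmin hD fun j =>
        (hDB.mono_right (subset_biUnion_of_mem B (mem_univ j))).symm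
    have := Nat.le_findGreatest (hsucc.le_bs f fun _ h => h.prop) hsucc
    omega
  calc CAt f x ≤ (univ.biUnion B).card := CAt_le_card f hcert
    _ ≤ (univ : Finset (Fin k)).card * sens f :=
        card_biUnion_le_card_mul _ _ _ fun j _ => card_le_sens_of_minimal f (hBmin j)
    _ ≤ bs f * sens f := by
        rw [card_univ, Fintype.card_fin]
        exact Nat.mul_le_mul_right _ (Nat.findGreatest_le _)
    _ = sens f * bs f := Nat.mul_comm _ _

lemma Cb_le_sens_mul_bs (b : Bool) : Cb f b ≤ sens f * bs f :=
  csSup_le' <| by rintro _ ⟨x, -, rfl⟩; exact CAt_le_sens_mul_bs f x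

end Fintype

lemma exists_dTree_query (g : BFun ι) (S : Finset ι) {P : Set (ι → Bool)} {d : ℕ}
    (h : ∀ σ, ∃ T : DTree ι, T.depth ≤ d ∧ ComputesOn T g (P ∩ subcube S σ)) :
    ∃ T : DTree ι, T.depth ≤ S.card + d ∧ ComputesOn T g P := by
  induction S using Finset.induction_on generalizing P with
  | empty =>
    obtain ⟨T, hT, hTg⟩ := h fun _ => false
    exact ⟨T, by simpa using hT, fun x hx => hTg x ⟨hx, by simp [subcube]⟩⟩
  | insert a S ha ih =>
    have hbranch (b : Bool) :
        ∃ T : DTree ι, T.depth ≤ S.card + d ∧ ComputesOn T g (P ∩ {x | x a = b}) := by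
      refine ih fun σ => ?_
      obtain ⟨T, hT, hTg⟩ := h (Function.update σ a b)
      refine ⟨T, hT, fun x ⟨⟨hxP, hxa⟩, hxS⟩ => hTg x ⟨hxP, fun i hi => ?_⟩⟩
      rcases eq_or_ne i a with rfl | hia
      · simpa using hxa
      · simpa [hia] using hxS i ((mem_insert.1 hi).resolve_left hia)
    obtain ⟨T₀, hT₀, hT₀g⟩ := hbranch false
    obtain ⟨T₁, hT₁, hT₁g⟩ := hbranch true
    refine ⟨.node a T₀ T₁, ?_, fun x hx => ?_⟩
    · simp only [DTree.depth, card_insert_of_notMem ha]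
      omega
    · cases hxa : x a
      · simpa [DTree.eval, hxa] using hT₀g x ⟨hx, hxa⟩
      · simpa [DTree.eval, hxa] using hT₁g x ⟨hx, hxa⟩

lemma subcube_inter_subset (Q S : Finset ι) (σ σ' : ι → Bool) :
    subcube Q σ ∩ subcube S σ' ⊆ subcube (Q ∪ S) (Q.piecewise σ σ') := by
  rintro x ⟨hxQ, hxS⟩ i hi
  by_cases hiQ : i ∈ Q
  · rw [piecewise_eq_of_mem _ _ _ hiQ, hxQ i hiQ]
  · rw [piecewise_eq_of_notMem _ _ _ hiQ, hxS i ((mem_union.1 hi).resolve_left hiQ)]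

lemma subcube_union_subset (Q S : Finset ι) (σ σ' : ι → Bool) :
    subcube (Q ∪ S) (Q.piecewise σ σ') ⊆ subcube Q σ := fun x hx i hi => by
  rw [hx i (mem_union_left S hi), piecewise_eq_of_mem _ _ _ hi]

def HasBSWithin (y : ι → Bool) (Q : Finset ι) (r : ℕ) : Prop :=
  HasDisjointBlocks (fun B => B ⊆ Q ∧ f (flip y B) ≠ f y) r

/-- The new block is where `y` differs from `z` on the certificate `S`; it misses `Q`, where
`y` and `z` agree. -/
lemma HasBSWithin.succ_of_isCert {y z : ι → Bool} {Q S : Finset ι} {r : ℕ}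
    (hr : HasBSWithin f y Q r) (hyz : ∀ i ∈ Q, y i = z i) (hf : f y ≠ f z)
    (hS : IsCert f z S) : HasBSWithin f y (Q ∪ S) (r + 1) := by
  obtain ⟨B, hB, hBQ⟩ := hr
  set D := S.filter fun i => y i ≠ z i
  have hD : f (flip y D) ≠ f y := by
    rw [hS _ fun i hi => flip_filter_ne_apply hi]
    exact hf.symm
  refine HasDisjointBlocks.snoc hB (fun j => ⟨(hBQ j).1.trans subset_union_left, (hBQ j).2⟩)
    ⟨(filter_subset _ _).trans subset_union_right, hD⟩ fun j => disjoint_left.2 ?_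
  intro i hiB hiD
  exact (mem_filter.1 hiD).2 (hyz i ((hBQ j).1 hiB))

variable [Fintype ι]

lemma HasBSWithin.le_bs {y : ι → Bool} {Q : Finset ι} {r : ℕ} (h : HasBSWithin f y Q r) :
    r ≤ bs f :=
  HasDisjointBlocks.le_bs f h fun _ hB => hB.2

/-- After `t` rounds, each querying a minimal certificate of a consistent 1-input, every
consistent 0-input has gained `t` more disjoint sensitive blocks. -/
lemma exists_dTree_computesOn_subcube (t : ℕ) :
    ∀ (r : ℕ) (Q : Finset ι) (σ : ι → Bool), bs f ≤ r + t →
      (∀ y ∈ subcube Q σ, f y = false → HasBSWithin f y Q r) →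
      ∃ T : DTree ι, T.depth ≤ t * Cb f true ∧ ComputesOn T f (subcube Q σ) := by
  induction t with
  | zero =>
    intro r Q σ hbs hinv
    by_cases hz : ∃ z ∈ subcube Q σ, f z = true
    swap
    · exact ⟨.leaf false, Nat.zero_le _, computesOn_leaf_false hz⟩
    obtain ⟨z, hzQ, hzf⟩ := hz
    refine ⟨.leaf true, Nat.zero_le _, fun x hx => ?_⟩
    by_contra hfx
    rw [DTree.eval, eq_comm, Bool.not_eq_true] at hfx
    have := ((hinv x hx hfx).succ_of_isCert f (eq_of_mem_subcube hx hzQ)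
      (by rw [hfx, hzf]; decide) (isCert_univ f z)).le_bs f
    omega
  | succ t ih =>
    intro r Q σ hbs hinv
    by_cases hz : ∃ z ∈ subcube Q σ, f z = true
    swap
    · exact ⟨.leaf false, Nat.zero_le _, computesOn_leaf_false hz⟩
    obtain ⟨z, hzQ, hzf⟩ := hz
    obtain ⟨S, hS, hScard⟩ := exists_isCert_card_eq_CAt f z
    obtain ⟨T, hT, hTf⟩ := exists_dTree_query f S (P := subcube Q σ) fun σ' => by
      have hinv' (y) (hy : y ∈ subcube (Q ∪ S) (Q.piecewise σ σ')) (hyf : f y = false) :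
          HasBSWithin f y (Q ∪ S) (r + 1) :=
        have hyQ := subcube_union_subset Q S σ σ' hy
        (hinv y hyQ hyf).succ_of_isCert f (eq_of_mem_subcube hyQ hzQ)
          (by rw [hyf, hzf]; decide) hS
      obtain ⟨T, hT, hTf⟩ := ih (r + 1) (Q ∪ S) (Q.piecewise σ σ') (by omega) hinv'
      exact ⟨T, hT, fun x hx => hTf x (subcube_inter_subset Q S σ σ' hx)⟩
    refine ⟨T, hT.trans ?_, hTf⟩
    rw [hScard, add_one_mul, add_comm]
    exact Nat.add_le_add_left (CAt_le_Cb f hzf) _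

lemma D_le_Cb_mul_bs : D f ≤ Cb f true * bs f := by
  obtain ⟨T, hT, hTf⟩ := exists_dTree_computesOn_subcube f (bs f) 0 ∅ (fun _ => false)
    (by omega) fun _ _ _ => HasDisjointBlocks.zero _
  calc D f ≤ T.depth :=
        Nat.sInf_le ⟨T, fun x => hTf x fun _ hi => absurd hi (notMem_empty _), rfl⟩
    _ ≤ Cb f true * bs f := by rwa [Nat.mul_comm]

end QC

/-- `D(f) ≤ C_1(f) · bs(f)`; with `C_1(f) ≤ s(f)·bs(f) ≤ bs(f)^2`
this yields `D(f) ≤ bs(f)^3`. -/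
theorem stmt6 {ι : Type*} [Fintype ι] [DecidableEq ι] (f : QC.BFun ι) :
    QC.D f ≤ QC.Cb f true * QC.bs f ∧
    QC.Cb f true ≤ QC.sens f * QC.bs f ∧
    QC.sens f * QC.bs f ≤ QC.bs f ^ 2 ∧
    QC.D f ≤ QC.bs f ^ 3 := by
  have hD := QC.D_le_Cb_mul_bs f
  have hC := QC.Cb_le_sens_mul_bs f true
  have hs : QC.sens f * QC.bs f ≤ QC.bs f ^ 2 := by
    rw [sq]
    exact Nat.mul_le_mul_right _ (QC.sens_le_bs f)
  refine ⟨hD, hC, hs, ?_⟩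
  calc QC.D f ≤ QC.Cb f true * QC.bs f := hD
    _ ≤ QC.bs f ^ 2 * QC.bs f := Nat.mul_le_mul_right _ (hC.trans hs)
    _ = QC.bs f ^ 3 := by ring
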